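/- Let env be an LTLf formula and A_e = (2^(X∪Y), Q_e, I_e, δ_e, Safe(S)) a DA such that for every infinite trace π: π ∈ L(A_e) iff π ⊨∀ env. Let Env be the environment winning region of the safety game on A_e. Then an environment strategy γ enforces env (i.e., γ ∈ ⟦env⟧) if and only if for every agent strategy σ the run of A_e on Trace(γ,σ) visits only states in Env. -/
import Mathlib


/- Common framework: traces, strategies, LTLf, plays, deterministic automata and games,
   following the setting of "LTLf synthesis with duties and rights". -/

namespace RightsSynth

/-- An environment move: a propositional interpretation over the environment variables
(an element of `2^X`). -/
abbrev EMove (Xv : Type) := Xv → Bool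

/-- An agent move: a propositional interpretation over the agent variables (element of `2^Y`). -/
abbrev AMove (Yv : Type) := Yv → Bool

/-- A letter of the alphabet `2^(X ∪ Y)`. -/
abbrev Letter (Xv Yv : Type) := EMove Xv × AMove Yv

/-- An infinite trace. -/
abbrev ITrace (Xv Yv : Type) := ℕ → Letter Xv Yv

/-- A finite trace (history). -/
abbrev FTrace (Xv Yv : Type) := List (Letter Xv Yv)

/-- An environment strategy `γ : (2^Y)* → 2^X`. -/
abbrev EnvStrat (Xv Yv : Type) := List (AMove Yv) → EMove Xv

/-- An agent strategy `σ : (2^X)^+ → 2^Y` (only ever applied to nonempty lists). -/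
abbrev AgStrat (Xv Yv : Type) := List (EMove Xv) → AMove Yv

variable {Xv Yv : Type}

/-- The `stop` action: all agent variables set to false. -/
def stopMove : AMove Yv := fun _ => false

/-- The finite prefix consisting of the first `n` letters of an infinite trace
(so `pref π (k+1)` is the prefix `π^k` of the paper). -/
def pref (π : ITrace Xv Yv) (n : ℕ) : FTrace Xv Yv := (List.range n).map π

/-- A finite trace is a prefix of an infinite trace. -/
def IsIPrefix (h : FTrace Xv Yv) (π : ITrace Xv Yv) : Prop := pref π h.length = h

/-- Concatenation `h · π` of a finite history with an infinite trace. -/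
def fappend (h : FTrace Xv Yv) (π : ITrace Xv Yv) : ITrace Xv Yv := fun n =>
  if hn : n < h.length then h.get ⟨n, hn⟩ else π (n - h.length)

/-- Shift of an infinite trace by `k` positions. -/
def shift (π : ITrace Xv Yv) (k : ℕ) : ITrace Xv Yv := fun n => π (k + n)

/-- LTLf formulas over atoms `α`. -/
inductive LTLf (α : Type) : Type
  | atom : α → LTLf α
  | neg : LTLf α → LTLf α
  | conj : LTLf α → LTLf α → LTLf α
  | next : LTLf α → LTLf α
  | untl : LTLf α → LTLf α → LTLf α

/-- Evaluation of an atom (a variable in `X ∪ Y`) at a letter. -/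
def evalAtom (l : Letter Xv Yv) : Xv ⊕ Yv → Bool
  | Sum.inl x => l.1 x
  | Sum.inr y => l.2 y

/-- `SatAt π φ i` is `π, i ⊨ φ` over the finite trace `π`. -/
def SatAt (π : FTrace Xv Yv) : LTLf (Xv ⊕ Yv) → ℕ → Prop
  | .atom a, i => ∃ hi : i < π.length, evalAtom (π.get ⟨i, hi⟩) a = true
  | .neg φ, i => ¬ SatAt π φ i
  | .conj φ ψ, i => SatAt π φ i ∧ SatAt π ψ i
  | .next φ, i => i + 1 < π.length ∧ SatAt π φ (i + 1)
  | .untl φ ψ, i =>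
      ∃ j, i ≤ j ∧ j < π.length ∧ SatAt π ψ j ∧ ∀ k, i ≤ k → k < j → SatAt π φ k

/-- `π ⊨ φ`, i.e. `π, 0 ⊨ φ`. -/
def Sat (π : FTrace Xv Yv) (φ : LTLf (Xv ⊕ Yv)) : Prop := SatAt π φ 0

/-- An infinite trace satisfies `φ` on all (nonempty finite) prefixes: `π ⊨∀ φ`. -/
def SatAllPrefI (π : ITrace Xv Yv) (φ : LTLf (Xv ⊕ Yv)) : Prop :=
  ∀ n : ℕ, Sat (pref π (n + 1)) φ

/-- The finite prefixes of the unique trace compatible with `γ` and `σ`. -/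
def traceAux (γ : EnvStrat Xv Yv) (σ : AgStrat Xv Yv) : ℕ → FTrace Xv Yv
  | 0 => []
  | n + 1 =>
      let p := traceAux γ σ n
      let x := γ (p.map Prod.snd)
      p ++ [(x, σ (p.map Prod.fst ++ [x]))]

/-- `Trace(γ,σ)`: the unique infinite trace compatible with `γ` and `σ`. -/
def traceOf (γ : EnvStrat Xv Yv) (σ : AgStrat Xv Yv) : ITrace Xv Yv := fun n =>
  let p := traceAux γ σ n
  let x := γ (p.map Prod.snd)
  (x, σ (p.map Prod.fst ++ [x]))

/-- An infinite trace is compatible with an environment strategy. -/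
def EnvCompat (γ : EnvStrat Xv Yv) (π : ITrace Xv Yv) : Prop :=
  ∀ n, (π n).1 = γ ((pref π n).map Prod.snd)

/-- An infinite trace is compatible with an agent strategy. -/
def AgCompat (σ : AgStrat Xv Yv) (π : ITrace Xv Yv) : Prop :=
  ∀ n, (π n).2 = σ ((pref π (n + 1)).map Prod.fst)

/-- An agent strategy is compatible with a finite history `h`. -/
def AgCompatH (σ : AgStrat Xv Yv) (h : FTrace Xv Yv) : Prop :=
  ∀ k (hk : k < h.length), (h.get ⟨k, hk⟩).2 = σ ((h.take (k + 1)).map Prod.fst)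

/-- An environment strategy is compatible with a finite history `h`. -/
def EnvCompatH (γ : EnvStrat Xv Yv) (h : FTrace Xv Yv) : Prop :=
  ∀ k (hk : k < h.length), (h.get ⟨k, hk⟩).1 = γ ((h.take k).map Prod.snd)

/-- A history that contains no `stop` action. -/
def StopFree (h : FTrace Xv Yv) : Prop := ∀ l ∈ h, l.2 ≠ stopMove

/-- A stopping agent strategy: on every compatible trace it eventually plays `stop`
forever, and never plays `stop` before that. -/
def Stopping (σ : AgStrat Xv Yv) : Prop :=
  ∀ π : ITrace Xv Yv, AgCompat σ π →
    ∃ i, (∀ j, i ≤ j → (π j).2 = stopMove) ∧ ∀ j, j < i → (π j).2 ≠ stopMove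

/-- `Play(γ,σ)`: the finite prefix of `Trace(γ,σ)` ending right before the first `stop`. -/
noncomputable def play (γ : EnvStrat Xv Yv) (σ : AgStrat Xv Yv) : FTrace Xv Yv :=
  pref (traceOf γ σ) (sInf {i | ((traceOf γ σ) i).2 = stopMove})

/-- `γ ⊳ env`: the environment strategy `γ` enforces the safety specification `env`. -/
def EnforcesEnv (env : LTLf (Xv ⊕ Yv)) (γ : EnvStrat Xv Yv) : Prop :=
  ∀ σ : AgStrat Xv Yv, SatAllPrefI (traceOf γ σ) env

/-- `γ ∈ ⟦env, af(h)⟧`: strategies that start after `h` but enforce `env` when the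
compatible traces are concatenated to `h`. -/
def EnvAfter (env : LTLf (Xv ⊕ Yv)) (h : FTrace Xv Yv) (γ : EnvStrat Xv Yv) : Prop :=
  ∀ σ : AgStrat Xv Yv, SatAllPrefI (fappend h (traceOf γ σ)) env

/-- `γ ∈ ⟦env⟧^h`. -/
def EnvSpecH (env : LTLf (Xv ⊕ Yv)) (h : FTrace Xv Yv) (γ : EnvStrat Xv Yv) : Prop :=
  ∀ σ : AgStrat Xv Yv, AgCompatH σ h →
    IsIPrefix h (traceOf γ σ) ∧ SatAllPrefI (traceOf γ σ) env

/-- `σ ▷_h φ`: `σ` enforces `φ` with respect to the history `h`. -/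
def EnforcesWrt (env φ : LTLf (Xv ⊕ Yv)) (σ : AgStrat Xv Yv) (h : FTrace Xv Yv) : Prop :=
  ∀ γ : EnvStrat Xv Yv, EnforcesEnv env γ → h <+: play γ σ → Sat (play γ σ) φ

/-- `σ ▷_af(h) φ`: `σ` enforces `φ` after the history `h`. -/
def EnforcesAfter (env φ : LTLf (Xv ⊕ Yv)) (σ : AgStrat Xv Yv) (h : FTrace Xv Yv) : Prop :=
  ∀ γ : EnvStrat Xv Yv, EnforcesEnv env γ → h <+: play γ σ → SatAt (play γ σ) φ h.length

/-- A deterministic automaton (acceptance conditions are given separately). -/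
structure DA (L : Type) (Q : Type) where
  init : Q
  next : Q → L → Q

variable {L Q Q1 Q2 Q3 : Type}

/-- The run of a DA on an infinite word, from state `q`: `runFrom q π n` is the `n`-th
state `q_n` of the run. -/
def DA.runFrom (B : DA L Q) (q : Q) (π : ℕ → L) : ℕ → Q
  | 0 => q
  | n + 1 => B.next (B.runFrom q π n) (π n)

/-- The run of a DA on an infinite word from its initial state. -/
def DA.run (B : DA L Q) (π : ℕ → L) : ℕ → Q := B.runFrom B.init π

/-- The state reached by a DA after reading a finite word from state `q`. -/
def DA.runList (B : DA L Q) : Q → List L → Q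
  | q, [] => q
  | q, a :: w => B.runList (B.next q a) w

/-- Product of two DAs. -/
def prod2 (A : DA L Q1) (B : DA L Q2) : DA L (Q1 × Q2) :=
  ⟨(A.init, B.init), fun q a => (A.next q.1 a, B.next q.2 a)⟩

/-- Product of three DAs. -/
def prod3 (A : DA L Q1) (B : DA L Q2) (C : DA L Q3) : DA L (Q1 × Q2 × Q3) :=
  ⟨(A.init, B.init, C.init), fun q a => (A.next q.1 a, B.next q.2.1 a, C.next q.2.2 a)⟩

/-- The environment winning region of the safety game on a DA with safe set `S`. -/
def EnvWinSet (B : DA (Letter Xv Yv) Q) (S : Set Q) : Set Q :=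
  {q | ∃ γ : EnvStrat Xv Yv, ∀ σ : AgStrat Xv Yv, ∀ k, B.runFrom q (traceOf γ σ) k ∈ S}

/-- Least-fixpoint approximants of the reachability game with target `R`. -/
def AgnApprox (B : DA (Letter Xv Yv) Q) (R : Set Q) : ℕ → Set Q
  | 0 => R
  | l + 1 => AgnApprox B R l ∪
      {q | ∀ x : EMove Xv, ∃ y : AMove Yv, B.next q (x, y) ∈ AgnApprox B R l}

/-- Agent winning region of the reachability game (union of the approximants). -/
def Agn (B : DA (Letter Xv Yv) Q) (R : Set Q) : Set Q := ⋃ l, AgnApprox B R l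

/-- Least-fixpoint approximants of the reachability game restricted to `Legal` states, where
the environment may only choose moves satisfying `Allowed` (this also subsumes the
reachability–safety reduction, with `Legal` the safe set, since non-`Legal` sink states never
enter any approximant). -/
def RAgnApprox (B : DA (Letter Xv Yv) Q) (Legal : Set Q)
    (Allowed : Q → EMove Xv → Prop) (R : Set Q) : ℕ → Set Q
  | 0 => R ∩ Legal
  | l + 1 => RAgnApprox B Legal Allowed R l ∪
      {q | q ∈ Legal ∧ ∀ x : EMove Xv, Allowed q x →
        ∃ y : AMove Yv, B.next q (x, y) ∈ RAgnApprox B Legal Allowed R l}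

/-- Agent winning region of the restricted reachability game. -/
def RAgn (B : DA (Letter Xv Yv) Q) (Legal : Set Q)
    (Allowed : Q → EMove Xv → Prop) (R : Set Q) : Set Q :=
  ⋃ l, RAgnApprox B Legal Allowed R l

/-- The greatest subset `E ⊆ S` such that from every state of `E` the environment has a move
keeping the game in `E` whatever the agent responds (greatest fixpoint). -/
def EnvGfp (B : DA (Letter Xv Yv) Q) (S : Set Q) : Set Q :=
  ⋃₀ {E : Set Q | E ⊆ S ∧ ∀ q ∈ E, ∃ x : EMove Xv, ∀ y : AMove Yv, B.next q (x, y) ∈ E}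


section Aux

variable {Xv Yv : Type}

lemma pref_succ' (π : ITrace Xv Yv) (n : ℕ) : pref π (n + 1) = pref π n ++ [π n] := by
  simp [pref, List.range_succ]

lemma pref_length' (π : ITrace Xv Yv) (n : ℕ) : (pref π n).length = n := by
  simp [pref]

lemma traceAux_eq_pref (γ : EnvStrat Xv Yv) (σ : AgStrat Xv Yv) (n : ℕ) :
    traceAux γ σ n = pref (traceOf γ σ) n := by
  induction n with
  | zero => simp [traceAux, pref]
  | succ n ih =>
    rw [pref_succ', ← ih]
    rfl

lemma traceOf_eq' (γ : EnvStrat Xv Yv) (σ : AgStrat Xv Yv) (n : ℕ) :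
    traceOf γ σ n =
      (γ ((pref (traceOf γ σ) n).map Prod.snd),
        σ ((pref (traceOf γ σ) n).map Prod.fst ++ [γ ((pref (traceOf γ σ) n).map Prod.snd)])) := by
  rw [← traceAux_eq_pref]; rfl

lemma traceOf_fst' (γ : EnvStrat Xv Yv) (σ : AgStrat Xv Yv) (n : ℕ) :
    (traceOf γ σ n).1 = γ ((pref (traceOf γ σ) n).map Prod.snd) := by
  rw [traceOf_eq' γ σ n]

lemma traceOf_snd' (γ : EnvStrat Xv Yv) (σ : AgStrat Xv Yv) (n : ℕ) :
    (traceOf γ σ n).2 =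
      σ ((pref (traceOf γ σ) n).map Prod.fst ++ [(traceOf γ σ n).1]) := by
  conv_lhs => rw [traceOf_eq' γ σ n]
  rw [traceOf_fst']

lemma runFrom_congr' {L Q : Type} (B : DA L Q) (q : Q) (π π' : ℕ → L) (n : ℕ)
    (h : ∀ i < n, π i = π' i) : B.runFrom q π n = B.runFrom q π' n := by
  induction n with
  | zero => rfl
  | succ n ih =>
    simp only [DA.runFrom, ih (fun i hi => h i (Nat.lt_succ_of_lt hi)),
      h n (Nat.lt_succ_self n)]

lemma runFrom_add' {L Q : Type} (B : DA L Q) (q : Q) (π : ℕ → L) (k j : ℕ) :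
    B.runFrom q π (k + j) = B.runFrom (B.runFrom q π k) (fun i => π (k + i)) j := by
  induction j with
  | zero => rfl
  | succ j ih => rw [Nat.add_succ]; simp only [DA.runFrom, ih]

/-- Shifted environment strategy: play `γ` as if after history `pref (traceOf γ σ) k`. -/
def envShift (γ : EnvStrat Xv Yv) (σ : AgStrat Xv Yv) (k : ℕ) : EnvStrat Xv Yv :=
  fun ys => γ ((pref (traceOf γ σ) k).map Prod.snd ++ ys)

/-- Glued agent strategy: replay the agent moves of `traceOf γ σ` for the first `k` steps,
then follow `σ'`. -/
def agGlue (γ : EnvStrat Xv Yv) (σ σ' : AgStrat Xv Yv) (k : ℕ) : AgStrat Xv Yv :=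
  fun xs => if xs.length ≤ k then (traceOf γ σ (xs.length - 1)).2 else σ' (xs.drop k)

lemma glue_step (γ : EnvStrat Xv Yv) (σ σ' : AgStrat Xv Yv) (k n : ℕ)
    (hp : pref (traceOf γ (agGlue γ σ σ' k)) n
        = pref (traceOf γ σ) (min n k) ++ pref (traceOf (envShift γ σ k) σ') (n - k)) :
    traceOf γ (agGlue γ σ σ' k) n =
      if n < k then traceOf γ σ n else traceOf (envShift γ σ k) σ' (n - k) := by
  rw [traceOf_eq' γ (agGlue γ σ σ' k) n, hp]
  by_cases hn : n < k
  · have hmin : min n k = n := Nat.min_eq_left hn.le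
    have hsub : n - k = 0 := Nat.sub_eq_zero_of_le hn.le
    rw [hmin, hsub, if_pos hn]
    have hτ0 : pref (traceOf (envShift γ σ k) σ') 0 = [] := rfl
    rw [hτ0, List.append_nil]
    have h1 : γ ((pref (traceOf γ σ) n).map Prod.snd) = (traceOf γ σ n).1 :=
      (traceOf_fst' γ σ n).symm
    rw [h1]
    have hlen : ((pref (traceOf γ σ) n).map Prod.fst ++ [(traceOf γ σ n).1]).length = n + 1 := by
      simp [pref_length']
    have h2 : agGlue γ σ σ' k ((pref (traceOf γ σ) n).map Prod.fst ++ [(traceOf γ σ n).1])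
        = (traceOf γ σ n).2 := by
      unfold agGlue
      rw [hlen, if_pos (Nat.succ_le_of_lt hn)]
      simp
    rw [h2]
  · have hmin : min n k = k := Nat.min_eq_right (Nat.le_of_not_lt hn)
    rw [hmin, if_neg hn]
    set τ := traceOf (envShift γ σ k) σ' with hτ
    set j := n - k with hj
    set h := pref (traceOf γ σ) k with hh
    have h1 : γ ((h ++ pref τ j).map Prod.snd) = (τ j).1 := by
      rw [List.map_append]
      exact (traceOf_fst' (envShift γ σ k) σ' j).symm
    rw [h1]
    have hlen : ((h ++ pref τ j).map Prod.fst ++ [(τ j).1]).length = k + j + 1 := by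
      simp [pref_length', hh]; omega
    have h2 : agGlue γ σ σ' k ((h ++ pref τ j).map Prod.fst ++ [(τ j).1]) = (τ j).2 := by
      unfold agGlue
      rw [hlen, if_neg (by omega)]
      have hdrop : ((h ++ pref τ j).map Prod.fst ++ [(τ j).1]).drop k
          = (pref τ j).map Prod.fst ++ [(τ j).1] := by
        rw [List.map_append, List.append_assoc]
        have : (h.map Prod.fst).length = k := by simp [hh, pref_length']
        rw [← this, List.drop_left]
      rw [hdrop]
      exact (traceOf_snd' (envShift γ σ k) σ' j).symm
    rw [h2]

lemma glue_pref (γ : EnvStrat Xv Yv) (σ σ' : AgStrat Xv Yv) (k : ℕ) (n : ℕ) :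
    pref (traceOf γ (agGlue γ σ σ' k)) n
      = pref (traceOf γ σ) (min n k) ++ pref (traceOf (envShift γ σ k) σ') (n - k) := by
  induction n with
  | zero => simp [pref]
  | succ n ih =>
    have hstep := glue_step γ σ σ' k n ih
    rw [pref_succ', ih, hstep]
    by_cases hn : n < k
    · rw [if_pos hn, Nat.min_eq_left hn.le, Nat.min_eq_left (Nat.succ_le_of_lt hn),
        Nat.sub_eq_zero_of_le hn.le, Nat.sub_eq_zero_of_le (Nat.succ_le_of_lt hn)]
      have h0 : pref (traceOf (envShift γ σ k) σ') 0 = [] := rfl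
      rw [h0, List.append_nil, List.append_nil, pref_succ']
    · rw [if_neg hn, Nat.min_eq_right (Nat.le_of_not_lt hn),
        Nat.min_eq_right (Nat.le_of_not_lt hn).step]
      have : n + 1 - k = (n - k) + 1 := by omega
      rw [this, pref_succ', List.append_assoc]

lemma glue_eq (γ : EnvStrat Xv Yv) (σ σ' : AgStrat Xv Yv) (k n : ℕ) :
    traceOf γ (agGlue γ σ σ' k) n =
      if n < k then traceOf γ σ n else traceOf (envShift γ σ k) σ' (n - k) :=
  glue_step γ σ σ' k n (glue_pref γ σ σ' k n)

end Aux

/-- an environment strategy `γ` enforces `env` iff, for every agent strategy,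
the run of `A_e` on `Trace(γ,σ)` visits only states in the environment winning region `Env`
of the safety game on `A_e`. -/
theorem statement4 {Xv Yv Qe : Type} [Fintype Xv] [Fintype Yv] [Fintype Qe]
    (env : LTLf (Xv ⊕ Yv)) (Ae : DA (Letter Xv Yv) Qe) (S : Set Qe)
    (hL : ∀ π : ITrace Xv Yv, (∀ k, Ae.run π k ∈ S) ↔ SatAllPrefI π env)
    (γ : EnvStrat Xv Yv) :
    EnforcesEnv env γ ↔
      ∀ σ : AgStrat Xv Yv, ∀ k, Ae.run (traceOf γ σ) k ∈ EnvWinSet Ae S := by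
  constructor
  · intro hE σ k
    refine ⟨envShift γ σ k, fun σ' j => ?_⟩
    set ρ := traceOf γ (agGlue γ σ σ' k) with hρ
    set τ := traceOf (envShift γ σ k) σ' with hτ
    have hρS : ∀ m, Ae.run ρ m ∈ S := (hL ρ).2 (hE _)
    have h1 : Ae.run ρ k = Ae.run (traceOf γ σ) k := by
      apply runFrom_congr'
      intro i hi
      rw [hρ, glue_eq, if_pos hi]
    have h2 : Ae.run ρ (k + j) = Ae.runFrom (Ae.run ρ k) (fun i => ρ (k + i)) j :=
      runFrom_add' Ae Ae.init ρ k j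
    have h3 : Ae.runFrom (Ae.run ρ k) (fun i => ρ (k + i)) j
        = Ae.runFrom (Ae.run (traceOf γ σ) k) τ j := by
      rw [h1]
      apply runFrom_congr'
      intro i _
      rw [hρ, glue_eq, if_neg (by omega)]
      congr 1
      omega
    rw [← h3, ← h2]
    exact hρS (k + j)
  · intro H σ
    rw [← hL]
    intro m
    obtain ⟨γ₀, hγ₀⟩ := H σ m
    exact hγ₀ (fun _ => stopMove) 0

end RightsSynth
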